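/- Cost decrease under the shifted candidate: in the setting of the feasibility problem below, let γ > 0 and let ℓ : ℝ^m → ℝ satisfy ℓ(u) ≥ 0 for all u, and define the cost J(N, z, v) = γN + Σ_{j=0}^{N−1} ℓ(v(j) − Kz(j)). Suppose (N, z(·), v(·)) is feasible at x ∈ ℝ^n with N ≥ 2. Then for every A ∈ ℝ^{n×n}, B ∈ ℝ^{n×m} with |[A B] − [Â B̂]| ≤ Δ_S entrywise and every w ∈ 𝒲, setting x⁺ = Ax + Bv(0) + w, there exist sequences (z⁺(·), v⁺(·)) such that (N−1, z⁺, v⁺) is feasible at x⁺ and J(N−1, z⁺, v⁺) ≤ J(N, z, v) − γ. -/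

import Mathlib

/-!
The perturbed successor is `x⁺ = z 1 + e` with `e = [A - Â, B - B̂] ζ₀ + w`, `ζ₀ = [z 0; v 0]`.
The candidate shifts the old plan by one step and corrects it by the nominal closed loop,
`z⁺ i = z (i + 1) + Â_K ^ i e` and `v⁺ i = v (i + 1) + K Â_K ^ i e`; as `v⁺ - K z⁺` is the shifted
`v - K z`, the cost drops by `γ` plus the nonnegative first stage cost.

Feasibility follows from the tube inclusion `Â_K ^ j e + ℬ⁺(j) ⊆ ℬ(j + 1)`. Since
`[z⁺ i; v⁺ i] = [z (i + 1); v (i + 1)] + [I; K] Â_K ^ i e`, a point of `ℬ⁺(j)` is a point of the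
shifted part of `ℬ(j + 1)` plus `∑ D i [I; K] Â_K ^ i e` with `D i ∈ ℐ^Δ(j - i - 1)`. As
`|e| ≤ Δ_S |ζ₀| + w̄` and `F_k |ζ₀| + F^𝒲_k` obeys the same recursion as `F_k` and `F^𝒲_k`,
reordering a double convolution bounds the remainder `c = Â_K ^ j e + ∑ D i [I; K] Â_K ^ i e`
entrywise by `(∑_{k ≤ j} |Â_K^{j-k}| F_k) |ζ₀| + ∑_{k ≤ j} |Â_K^{j-k}| F^𝒲_k`. Hence
`c = M ζ₀ + c₂` with `M ∈ ℐ^Δ(j)` and `c₂ ∈ ℐ^𝒲(j)`, the two terms `ℬ(j + 1)` adds to its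
shifted part.
-/

open Matrix Finset Pointwise

noncomputable section

/-- entrywise absolute value of a real matrix -/
def matAbs {ι κ : Type*} (M : Matrix ι κ ℝ) : Matrix ι κ ℝ := fun i j => |M i j|

/-- interval matrix `C ⊕ [±Δ] = {C + D : |D| ≤ Δ}` -/
def intervalMat {ι κ : Type*} (C Δ : Matrix ι κ ℝ) : Set (Matrix ι κ ℝ) :=
  {X | ∀ i j, |X i j - C i j| ≤ Δ i j}

/-- representation of a matrix zonotope: a center and a list of generators -/
structure ZRep (ι κ : Type*) where
  c : Matrix ι κ ℝ
  g : List (Matrix ι κ ℝ)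

/-- the set of matrices described by a matrix zonotope representation -/
def ZRep.set {ι κ : Type*} (Z : ZRep ι κ) : Set (Matrix ι κ ℝ) :=
  {X | ∃ β : Fin Z.g.length → ℝ, (∀ i, |β i| ≤ 1) ∧ X = Z.c + ∑ i, β i • Z.g.get i}

/-- interval hull `box(⟨M;G⟩) = M ⊕ [± Σ |G_i|]` of a matrix zonotope -/
def ZRep.box {ι κ : Type*} (Z : ZRep ι κ) : Set (Matrix ι κ ℝ) :=
  intervalMat Z.c ((Z.g.map matAbs).sum)

/-- the family `E(F)` of single-entry matrices, as a list -/
def EList {ι κ : Type*} [Fintype ι] [Fintype κ] [DecidableEq ι] [DecidableEq κ]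
    (F : Matrix ι κ ℝ) : List (Matrix ι κ ℝ) :=
  (Finset.univ : Finset (ι × κ)).toList.map fun p => Matrix.single p.1 p.2 (F p.1 p.2)

/-- the operator `𝕋_ℐ` (for `ℐ = C ⊕ [±Δ]`) acting on zonotope representations:
`𝕋_ℐ(⟨M;G₁,…,G_g⟩) = ⟨CM; CG₁,…,CG_g, E(Δ(|M|+Σ|G_i|))⟩` -/
def Tstep {ι κ μ : Type*} [Fintype ι] [Fintype κ] [Fintype μ] [DecidableEq ι] [DecidableEq μ]
    (C Δ : Matrix ι κ ℝ) (Z : ZRep κ μ) : ZRep ι μ :=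
  ⟨C * Z.c, Z.g.map (fun G => C * G) ++ EList (Δ * (matAbs Z.c + (Z.g.map matAbs).sum))⟩

/-- a vector of `ℝ^n` viewed as a column matrix -/
def colVec {n : ℕ} (w : Fin n → ℝ) : Matrix (Fin n) (Fin 1) ℝ := fun i _ => w i

/-- the set `𝒜_K = {Â_K + D[Iₙ; K] : |D| ≤ Δ_S}` -/
def AKset {n m : ℕ} (AhK : Matrix (Fin n) (Fin n) ℝ) (K : Matrix (Fin m) (Fin n) ℝ)
    (ΔS : Matrix (Fin n) (Fin n ⊕ Fin m) ℝ) : Set (Matrix (Fin n) (Fin n) ℝ) :=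
  {X | ∃ D ∈ intervalMat 0 ΔS, X = AhK + D * Matrix.fromRows 1 K}

/-- `ℐ^Δ(j) = [± Σ_{i=0}^{j} |Â_K^{j−i}| F_i]` -/
def IDelta {n m : ℕ} (AhK : Matrix (Fin n) (Fin n) ℝ)
    (FΔ : ℕ → Matrix (Fin n) (Fin n ⊕ Fin m) ℝ) (j : ℕ) :
    Set (Matrix (Fin n) (Fin n ⊕ Fin m) ℝ) :=
  intervalMat 0 (∑ i ∈ Finset.range (j + 1), matAbs (AhK ^ (j - i)) * FΔ i)

/-- `ℐ^𝒲(j) = [± Σ_{i=0}^{j} |Â_K^{j−i}| F^𝒲_i]`, a set of (column) vectors of `ℝ^n` -/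
def IWvec {n : ℕ} (AhK : Matrix (Fin n) (Fin n) ℝ)
    (FW : ℕ → Matrix (Fin n) (Fin 1) ℝ) (j : ℕ) : Set (Matrix (Fin n) (Fin 1) ℝ) :=
  intervalMat 0 (∑ i ∈ Finset.range (j + 1), matAbs (AhK ^ (j - i)) * FW i)

/-- the tube `ℬ(j) = Σ_{i<j} ℐ^Δ(j−i−1)[z(i); v(i)] ⊕ Σ_{i<j} ℐ^𝒲(i)` -/
def Btube {n m : ℕ} (AhK : Matrix (Fin n) (Fin n) ℝ)
    (FΔ : ℕ → Matrix (Fin n) (Fin n ⊕ Fin m) ℝ) (FW : ℕ → Matrix (Fin n) (Fin 1) ℝ)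
    (z : ℕ → Matrix (Fin n) (Fin 1) ℝ) (v : ℕ → Matrix (Fin m) (Fin 1) ℝ) (j : ℕ) :
    Set (Matrix (Fin n) (Fin 1) ℝ) :=
  (∑ i ∈ Finset.range j,
    (fun D => D * Matrix.fromRows (z i) (v i)) '' IDelta AhK FΔ (j - i - 1)) +
  ∑ i ∈ Finset.range j, IWvec AhK FW i

/-- feasibility of `(N, z(·), v(·))` at `x` for the variable-horizon robust control problem -/
def Feasible {n m : ℕ} (Ah : Matrix (Fin n) (Fin n) ℝ) (Bh : Matrix (Fin n) (Fin m) ℝ)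
    (K : Matrix (Fin m) (Fin n) ℝ)
    (FΔ : ℕ → Matrix (Fin n) (Fin n ⊕ Fin m) ℝ) (FW : ℕ → Matrix (Fin n) (Fin 1) ℝ)
    (X : Set (Matrix (Fin n) (Fin 1) ℝ)) (U : Set (Matrix (Fin m) (Fin 1) ℝ))
    (Xf : Set (Matrix (Fin n) (Fin 1) ℝ)) (x : Matrix (Fin n) (Fin 1) ℝ) (N : ℕ)
    (z : ℕ → Matrix (Fin n) (Fin 1) ℝ) (v : ℕ → Matrix (Fin m) (Fin 1) ℝ) : Prop :=
  1 ≤ N ∧ z 0 = x ∧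
  (∀ j < N, z (j + 1) = Ah * z j + Bh * v j) ∧
  (∀ j ≤ N, {z j} + Btube (Ah + Bh * K) FΔ FW z v j ⊆ X) ∧
  (∀ j < N, {v j} + (fun e => K * e) '' Btube (Ah + Bh * K) FΔ FW z v j ⊆ U) ∧
  {z N} + Btube (Ah + Bh * K) FΔ FW z v N ⊆ Xf

theorem Finset.sum_range_sum_range_sub_sub_one {M : Type*} [AddCommMonoid M]
    (f : ℕ → ℕ → M) (j : ℕ) :
    ∑ k ∈ range j, ∑ i ∈ range k, f i (k - i - 1) =
      ∑ i ∈ range j, ∑ k ∈ range (j - i - 1), f i k := by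
  cases j with
  | zero => simp
  | succ j =>
    have h : ∀ k i, k + 1 - i - 1 = k - i := by omega
    rw [sum_range_succ', sum_range_succ]
    simp only [h, Nat.sub_self, range_zero, sum_empty, add_zero]
    exact sum_range_diag_flip j f

namespace Matrix

variable {ι κ μ : Type*} [Fintype κ]

theorem mul_apply_nonneg {M : Matrix ι κ ℝ} {N : Matrix κ μ ℝ}
    (hM : ∀ i k, 0 ≤ M i k) (hN : ∀ k j, 0 ≤ N k j) (i : ι) (j : μ) : 0 ≤ (M * N) i j :=
  sum_nonneg fun k _ => mul_nonneg (hM i k) (hN k j)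

theorem abs_mul_apply_le {M P : Matrix ι κ ℝ} {N Q : Matrix κ μ ℝ}
    (hM : ∀ i k, |M i k| ≤ P i k) (hN : ∀ k j, |N k j| ≤ Q k j) (i : ι) (j : μ) :
    |(M * N) i j| ≤ (P * Q) i j :=
  (abs_sum_le_sum_abs _ _).trans <| sum_le_sum fun k _ => by
    rw [abs_mul]
    exact mul_le_mul (hM i k) (hN k j) (abs_nonneg _) ((abs_nonneg _).trans (hM i k))

end Matrix

theorem mem_intervalMat_zero {ι κ : Type*} {X P : Matrix ι κ ℝ} :
    X ∈ intervalMat 0 P ↔ ∀ i j, |X i j| ≤ P i j := by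
  simp [intervalMat]

theorem exists_abs_le_abs_sub_le {c a b : ℝ} (ha : 0 ≤ a) (hb : 0 ≤ b) (h : |c| ≤ a + b) :
    ∃ x, |x| ≤ a ∧ |c - x| ≤ b := by
  refine ⟨max (-a) (min a c),
    abs_le.2 ⟨le_max_left _ _, max_le (by linarith) (min_le_left _ _)⟩, abs_le.2 ⟨?_, ?_⟩⟩ <;>
    cases abs_le.1 h <;> cases max_cases (-a) (min a c) <;> cases min_cases a c <;> linarith

theorem exists_mem_intervalMat_mul_eq {ι κ : Type*} [Fintype κ] {P : Matrix ι κ ℝ}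
    (hP : ∀ i k, 0 ≤ P i k) (ζ : Matrix κ (Fin 1) ℝ) {c : Matrix ι (Fin 1) ℝ}
    (hc : ∀ i, |c i 0| ≤ (P * matAbs ζ) i 0) :
    ∃ M ∈ intervalMat 0 P, M * ζ = c := by
  obtain ⟨b, hb_eq⟩ : ∃ b : ι → ℝ, ∀ i, (P * matAbs ζ) i 0 = b i := ⟨_, fun _ => rfl⟩
  simp only [hb_eq] at hc
  have hb : ∀ i, 0 ≤ b i := fun i =>
    hb_eq i ▸ mul_apply_nonneg hP (fun _ _ => abs_nonneg _) i 0
  have hsign : ∀ x : ℝ, |(SignType.sign x : ℝ)| ≤ 1 := fun x => by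
    rcases lt_trichotomy x 0 with h | h | h <;> simp [h]
  -- Rows with `b i = 0` get `c i 0 / 0 = 0`, which is right since there `c i 0 = 0`.
  refine ⟨of fun i k => P i k * SignType.sign (ζ k 0) * (c i 0 / b i),
    mem_intervalMat_zero.2 fun i k => ?_, ?_⟩
  · rw [of_apply, abs_mul, abs_mul, abs_of_nonneg (hP i k), abs_div, abs_of_nonneg (hb i)]
    calc P i k * |(SignType.sign (ζ k 0) : ℝ)| * (|c i 0| / b i) ≤ P i k * 1 :=
          mul_le_mul (mul_le_of_le_one_right (hP i k) (hsign _))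
            (div_le_one_of_le₀ (hc i) (hb i)) (div_nonneg (abs_nonneg _) (hb i)) (hP i k)
      _ = P i k := mul_one _
  · ext i o
    obtain rfl := Subsingleton.elim o 0
    have hrow : ∑ k, P i k * SignType.sign (ζ k 0) * (c i 0 / b i) * ζ k 0 =
        b i * (c i 0 / b i) := by
      rw [← hb_eq, mul_apply, sum_mul]
      exact sum_congr rfl fun k _ => by rw [matAbs, ← sign_mul_self]; ring
    simp only [mul_apply, of_apply, hrow]
    by_cases h : b i = 0
    · have hci := hc i
      rw [h] at hci
      rw [h, zero_mul, abs_nonpos_iff.1 hci]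
    · exact mul_div_cancel₀ _ h

theorem mem_image_mul_add_intervalMat_of_abs_le {ι κ : Type*} [Fintype κ] {P : Matrix ι κ ℝ}
    {Q : Matrix ι (Fin 1) ℝ} (hP : ∀ i k, 0 ≤ P i k) (hQ : ∀ i j, 0 ≤ Q i j)
    (ζ : Matrix κ (Fin 1) ℝ) {c : Matrix ι (Fin 1) ℝ}
    (hc : ∀ i, |c i 0| ≤ (P * matAbs ζ + Q) i 0) :
    c ∈ (fun D => D * ζ) '' intervalMat 0 P + intervalMat 0 Q := by
  choose x hx hcx using fun i =>
    exists_abs_le_abs_sub_le (mul_apply_nonneg hP (fun _ _ => abs_nonneg _) i 0) (hQ i 0) (hc i)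
  obtain ⟨M, hM, hMζ⟩ := exists_mem_intervalMat_mul_eq hP ζ (c := fun i _ => x i) hx
  refine ⟨M * ζ, ⟨M, hM, rfl⟩, c - M * ζ, mem_intervalMat_zero.2 fun i o => ?_,
    add_sub_cancel _ _⟩
  obtain rfl := Subsingleton.elim o 0
  rw [Matrix.sub_apply, hMζ]
  exact hcx i

section Convolution

variable {ι κ μ : Type*}

def convolve [Fintype κ] (a : ℕ → Matrix ι κ ℝ) (F : ℕ → Matrix κ μ ℝ) (t : ℕ) :
    Matrix ι μ ℝ :=
  ∑ i ∈ range (t + 1), a (t - i) * F i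

variable [Fintype κ] (a : ℕ → Matrix ι κ ℝ)

theorem convolve_eq_add_sum (F : ℕ → Matrix κ μ ℝ) (t : ℕ) :
    convolve a F t = a t * F 0 + ∑ k ∈ range t, a (t - k - 1) * F (k + 1) := by
  rw [convolve, sum_range_succ', add_comm, Nat.sub_zero]
  rfl

theorem convolve_add (F G : ℕ → Matrix κ μ ℝ) (t : ℕ) :
    convolve a (fun k => F k + G k) t = convolve a F t + convolve a G t := by
  simp only [convolve, Matrix.mul_add, sum_add_distrib]

theorem convolve_mul_right {ν : Type*} [Fintype μ] (F : ℕ → Matrix κ μ ℝ) (M : Matrix μ ν ℝ)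
    (t : ℕ) : convolve a (fun k => F k * M) t = convolve a F t * M := by
  simp only [convolve, Matrix.sum_mul, Matrix.mul_assoc]

theorem convolve_apply_nonneg (ha : ∀ t i k, 0 ≤ a t i k) {F : ℕ → Matrix κ μ ℝ} {t : ℕ}
    (hF : ∀ k ≤ t, ∀ i j, 0 ≤ F k i j) (i : ι) (j : μ) : 0 ≤ convolve a F t i j := by
  rw [convolve, Matrix.sum_apply]
  exact sum_nonneg fun k hk =>
    mul_apply_nonneg (ha _) (hF k (Nat.lt_succ_iff.1 (mem_range.1 hk))) i j

end Convolution

theorem apply_nonneg_of_eq_mul_convolve {ι μ : Type*} [Fintype ι] {a : ℕ → Matrix ι ι ℝ}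
    (ha : ∀ t i k, 0 ≤ a t i k) {C : Matrix ι ι ℝ} (hC : ∀ i j, 0 ≤ C i j)
    {F : ℕ → Matrix ι μ ℝ} (hF0 : ∀ i j, 0 ≤ F 0 i j)
    (hF : ∀ k, F (k + 1) = C * convolve a F k) (k : ℕ) : ∀ i j, 0 ≤ F k i j := by
  induction k using Nat.strong_induction_on with
  | _ k ih =>
    cases k with
    | zero => exact hF0
    | succ k =>
      rw [hF k]
      exact mul_apply_nonneg hC (convolve_apply_nonneg a ha fun l hl => ih l (by omega))

-- As power series in `X`, with `G = (1 - X C a)⁻¹ C` and `q = (1 - X C a)⁻¹ q 0`, both sides are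
-- `a (1 - X C a)⁻¹ C a q 0`.
theorem convolve_eq_of_eq_mul_convolve {ι μ : Type*} [Fintype ι] (a : ℕ → Matrix ι ι ℝ)
    (C : Matrix ι ι ℝ) {G : ℕ → Matrix ι ι ℝ} {q : ℕ → Matrix ι μ ℝ} (hG0 : G 0 = C)
    (hG : ∀ k, G (k + 1) = C * convolve a G k) (hq : ∀ k, q (k + 1) = C * convolve a q k)
    (j : ℕ) :
    convolve a q j = a j * q 0 + ∑ i ∈ range j, convolve a G (j - i - 1) * (a i * q 0) := by
  induction j using Nat.strong_induction_on with
  | _ j ih =>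
    have hG' : ∀ t, convolve a G t =
        a t * C + ∑ k ∈ range t, a (t - k - 1) * (C * convolve a G k) := fun t => by
      rw [convolve_eq_add_sum, hG0]
      simp only [hG]
    rw [convolve_eq_add_sum, add_right_inj]
    calc ∑ k ∈ range j, a (j - k - 1) * q (k + 1)
        = ∑ k ∈ range j, a (j - k - 1) *
            (C * (a k * q 0 + ∑ i ∈ range k, convolve a G (k - i - 1) * (a i * q 0))) :=
          sum_congr rfl fun k hk => by rw [hq, ih k (mem_range.1 hk)]
      _ = ∑ k ∈ range j, a (j - k - 1) * (C * (a k * q 0)) +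
            ∑ k ∈ range j, ∑ i ∈ range k,
              a (j - k - 1) * (C * (convolve a G (k - i - 1) * (a i * q 0))) := by
          simp only [Matrix.mul_add, Matrix.mul_sum, sum_add_distrib]
      _ = ∑ i ∈ range j, a (j - i - 1) * (C * (a i * q 0)) +
            ∑ i ∈ range j, ∑ k ∈ range (j - i - 1),
              a (j - i - 1 - k - 1) * (C * (convolve a G k * (a i * q 0))) := by
          rw [← sum_range_sum_range_sub_sub_one]
          refine congrArg _ (sum_congr rfl fun k hk => sum_congr rfl fun i hi => ?_)
          have : j - i - 1 - (k - i - 1) - 1 = j - k - 1 := by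
            have := mem_range.1 hk; have := mem_range.1 hi; omega
          rw [this]
      _ = ∑ i ∈ range j, convolve a G (j - i - 1) * (a i * q 0) := by
          conv_rhs => enter [2, i]; rw [hG']
          simp only [Matrix.add_mul, Matrix.sum_mul, sum_add_distrib, Matrix.mul_assoc]

theorem matAbs_fromRows_one {n m : ℕ} (K : Matrix (Fin m) (Fin n) ℝ) :
    matAbs (fromRows (1 : Matrix (Fin n) (Fin n) ℝ) K) = fromRows 1 (matAbs K) := by
  ext (i | i) j
  · simp only [matAbs, fromRows_apply_inl, one_apply]
    split_ifs <;> simp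
  · rfl

theorem submatrix_inl_add_submatrix_inr_mul_eq_mul_fromRows {n m : ℕ}
    (ΔS : Matrix (Fin n) (Fin n ⊕ Fin m) ℝ) (L : Matrix (Fin m) (Fin n) ℝ) :
    ΔS.submatrix id Sum.inl + ΔS.submatrix id Sum.inr * L =
      ΔS * fromRows (1 : Matrix (Fin n) (Fin n) ℝ) L := by
  conv_rhs => rw [← fromCols_toCols ΔS]
  rw [fromCols_mul_fromRows, Matrix.mul_one]
  rfl

theorem abs_fromCols_sub_mul_add_apply_le {ι κ₁ κ₂ : Type*} [Fintype κ₁] [Fintype κ₂]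
    {A Ah : Matrix ι κ₁ ℝ} {B Bh : Matrix ι κ₂ ℝ} {ΔS : Matrix ι (κ₁ ⊕ κ₂) ℝ}
    (hAB : ∀ i j, |fromCols A B i j - fromCols Ah Bh i j| ≤ ΔS i j) {w W : Matrix ι (Fin 1) ℝ}
    (hw : w ∈ intervalMat 0 W) (ζ : Matrix (κ₁ ⊕ κ₂) (Fin 1) ℝ) (i : ι) (j : Fin 1) :
    |(fromCols (A - Ah) (B - Bh) * ζ + w) i j| ≤ (ΔS * matAbs ζ + W) i j := by
  have hD : ∀ i k, |fromCols (A - Ah) (B - Bh) i k| ≤ ΔS i k := by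
    rintro i (k | k)
    · simpa using hAB i (.inl k)
    · simpa using hAB i (.inr k)
  exact (abs_add_le _ _).trans
    (add_le_add (abs_mul_apply_le hD (fun _ _ => le_rfl) i j) (mem_intervalMat_zero.1 hw i j))

section Tube

variable {n m : ℕ} {AhK : Matrix (Fin n) (Fin n) ℝ}
  {FΔ : ℕ → Matrix (Fin n) (Fin n ⊕ Fin m) ℝ} {FW : ℕ → Matrix (Fin n) (Fin 1) ℝ}

theorem Btube_succ (z : ℕ → Matrix (Fin n) (Fin 1) ℝ) (v : ℕ → Matrix (Fin m) (Fin 1) ℝ)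
    (j : ℕ) :
    Btube AhK FΔ FW z v (j + 1) =
      ((fun D => D * fromRows (z 0) (v 0)) '' IDelta AhK FΔ j + IWvec AhK FW j) +
        Btube AhK FΔ FW (fun i => z (i + 1)) (fun i => v (i + 1)) j := by
  rw [Btube, Btube, sum_range_succ', sum_range_succ (fun i => IWvec AhK FW i)]
  simp only [Nat.add_sub_add_right, Nat.add_sub_cancel, Nat.sub_zero]
  abel

theorem exists_sub_mem_Btube_of_mem_Btube_add {z₁ z₂ : ℕ → Matrix (Fin n) (Fin 1) ℝ}
    {v₁ v₂ : ℕ → Matrix (Fin m) (Fin 1) ℝ} {j : ℕ} {b : Matrix (Fin n) (Fin 1) ℝ}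
    (hb : b ∈ Btube AhK FΔ FW (fun i => z₁ i + z₂ i) (fun i => v₁ i + v₂ i) j) :
    ∃ D : ℕ → Matrix (Fin n) (Fin n ⊕ Fin m) ℝ,
      (∀ i ∈ range j, D i ∈ IDelta AhK FΔ (j - i - 1)) ∧
      b - ∑ i ∈ range j, D i * fromRows (z₂ i) (v₂ i) ∈ Btube AhK FΔ FW z₁ v₁ j := by
  obtain ⟨_, hb₁, b₂, hb₂, rfl⟩ := hb
  obtain ⟨g, hg, rfl⟩ := (Set.mem_finsetSum _ _ _).1 hb₁
  choose! D hD hDg using fun i (hi : i ∈ range j) => hg hi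
  refine ⟨D, hD, ?_⟩
  have hsplit : ∑ i ∈ range j, g i - ∑ i ∈ range j, D i * fromRows (z₂ i) (v₂ i) =
      ∑ i ∈ range j, D i * fromRows (z₁ i) (v₁ i) := by
    rw [← sum_sub_distrib]
    refine sum_congr rfl fun i hi => ?_
    rw [← hDg i hi, sub_eq_iff_eq_add, ← Matrix.mul_add]
    exact congrArg (D i * ·) (by ext (k | k) o <;> simp)
  rw [add_sub_right_comm, hsplit]
  exact Set.add_mem_add
    (Set.finsetSum_mem_finsetSum _ _ _ fun i hi => ⟨D i, hD i hi, rfl⟩) hb₂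

theorem add_mem_Btube_succ {K : Matrix (Fin m) (Fin n) ℝ}
    {ΔS : Matrix (Fin n) (Fin n ⊕ Fin m) ℝ} {ΔK : Matrix (Fin n) (Fin n) ℝ}
    (hΔK : ΔK = ΔS * fromRows (1 : Matrix (Fin n) (Fin n) ℝ) (matAbs K)) (hFΔ0 : FΔ 0 = ΔS)
    (hFΔ : ∀ k, FΔ (k + 1) = ΔK * convolve (fun t => matAbs (AhK ^ t)) FΔ k)
    (hFW : ∀ k, FW (k + 1) = ΔK * convolve (fun t => matAbs (AhK ^ t)) FW k)
    (hFΔ_nonneg : ∀ k i j, 0 ≤ FΔ k i j) (hFW_nonneg : ∀ k i j, 0 ≤ FW k i j)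
    {z : ℕ → Matrix (Fin n) (Fin 1) ℝ} {v : ℕ → Matrix (Fin m) (Fin 1) ℝ}
    {e : Matrix (Fin n) (Fin 1) ℝ}
    (he : ∀ i j, |e i j| ≤ (ΔS * matAbs (fromRows (z 0) (v 0)) + FW 0) i j)
    {j : ℕ} {b : Matrix (Fin n) (Fin 1) ℝ}
    (hb : b ∈ Btube AhK FΔ FW (fun i => z (i + 1) + AhK ^ i * e)
      (fun i => v (i + 1) + K * (AhK ^ i * e)) j) :
    AhK ^ j * e + b ∈ Btube AhK FΔ FW z v (j + 1) := by
  set a : ℕ → Matrix (Fin n) (Fin n) ℝ := fun t => matAbs (AhK ^ t)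
  set R := fromRows (1 : Matrix (Fin n) (Fin n) ℝ) (matAbs K)
  set ζ := fromRows (z 0) (v 0)
  obtain ⟨D, hD, hbD⟩ := exists_sub_mem_Btube_of_mem_Btube_add hb
  rw [Btube_succ, show AhK ^ j * e + b =
    (AhK ^ j * e + ∑ i ∈ range j, D i * fromRows (AhK ^ i * e) (K * (AhK ^ i * e))) +
      (b - ∑ i ∈ range j, D i * fromRows (AhK ^ i * e) (K * (AhK ^ i * e))) by abel]
  refine Set.add_mem_add (mem_image_mul_add_intervalMat_of_abs_le (P := convolve a FΔ j)
    (Q := convolve a FW j)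
    (convolve_apply_nonneg a (fun _ _ _ => abs_nonneg _) fun k _ => hFΔ_nonneg k)
    (convolve_apply_nonneg a (fun _ _ _ => abs_nonneg _) fun k _ => hFW_nonneg k) ζ
    fun r => ?_) hbD
  have hconv := convolve_eq_of_eq_mul_convolve a ΔK
    (G := fun k => FΔ k * R) (q := fun k => FΔ k * matAbs ζ + FW k) (by rw [hFΔ0, hΔK])
    (fun k => by rw [hFΔ k, convolve_mul_right, Matrix.mul_assoc])
    (fun k => by rw [hFΔ k, hFW k, convolve_add, convolve_mul_right, Matrix.mul_assoc,
      Matrix.mul_add]) j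
  rw [convolve_add, convolve_mul_right, hFΔ0] at hconv
  rw [hconv]
  have hR : ∀ k l, |fromRows (1 : Matrix (Fin n) (Fin n) ℝ) K k l| ≤ R k l := fun k l =>
    (congrFun (congrFun (matAbs_fromRows_one K) k) l).le
  have hterm : ∀ i ∈ range j, |(D i * fromRows (AhK ^ i * e) (K * (AhK ^ i * e))) r 0| ≤
      (convolve a (fun k => FΔ k * R) (j - i - 1) * (a i * (ΔS * matAbs ζ + FW 0))) r 0 :=
    fun i hi => by
      rw [convolve_mul_right, Matrix.mul_assoc, show fromRows (AhK ^ i * e) (K * (AhK ^ i * e)) =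
        fromRows 1 K * (AhK ^ i * e) by rw [fromRows_mul, Matrix.one_mul]]
      exact abs_mul_apply_le (mem_intervalMat_zero.1 (hD i hi))
        (abs_mul_apply_le hR (abs_mul_apply_le (fun _ _ => le_rfl) he)) r 0
  rw [Matrix.add_apply, Matrix.add_apply, Matrix.sum_apply, Matrix.sum_apply]
  exact (abs_add_le _ _).trans (add_le_add (abs_mul_apply_le (fun _ _ => le_rfl) he r 0)
    ((abs_sum_le_sum_abs _ _).trans (sum_le_sum hterm)))

end Tube

theorem Set.singleton_add_subset_singleton_add {α : Type*} [AddSemigroup α] {x d : α}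
    {s t : Set α} (h : ∀ b ∈ s, d + b ∈ t) : {x + d} + s ⊆ {x} + t := by
  rintro _ ⟨_, rfl, b, hb, rfl⟩
  exact ⟨x, rfl, d + b, h b hb, (add_assoc x d b).symm⟩

theorem Feasible.shift {n m : ℕ} {Ah : Matrix (Fin n) (Fin n) ℝ}
    {Bh : Matrix (Fin n) (Fin m) ℝ} {K : Matrix (Fin m) (Fin n) ℝ}
    {FΔ : ℕ → Matrix (Fin n) (Fin n ⊕ Fin m) ℝ} {FW : ℕ → Matrix (Fin n) (Fin 1) ℝ}
    {X : Set (Matrix (Fin n) (Fin 1) ℝ)} {U : Set (Matrix (Fin m) (Fin 1) ℝ)}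
    {Xf : Set (Matrix (Fin n) (Fin 1) ℝ)} {x : Matrix (Fin n) (Fin 1) ℝ} {N : ℕ}
    {z : ℕ → Matrix (Fin n) (Fin 1) ℝ} {v : ℕ → Matrix (Fin m) (Fin 1) ℝ}
    (hfeas : Feasible Ah Bh K FΔ FW X U Xf x N z v) (hN : 2 ≤ N)
    {e : Matrix (Fin n) (Fin 1) ℝ}
    (hshift : ∀ j, ∀ b ∈ Btube (Ah + Bh * K) FΔ FW
      (fun i => z (i + 1) + (Ah + Bh * K) ^ i * e)
      (fun i => v (i + 1) + K * ((Ah + Bh * K) ^ i * e)) j,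
      (Ah + Bh * K) ^ j * e + b ∈ Btube (Ah + Bh * K) FΔ FW z v (j + 1)) :
    Feasible Ah Bh K FΔ FW X U Xf (z 1 + e) (N - 1)
      (fun i => z (i + 1) + (Ah + Bh * K) ^ i * e)
      (fun i => v (i + 1) + K * ((Ah + Bh * K) ^ i * e)) := by
  obtain ⟨N, rfl⟩ := Nat.exists_eq_add_of_le' hN
  obtain ⟨-, -, hdyn, hX, hU, hXf⟩ := hfeas
  rw [show N + 2 - 1 = N + 1 by omega]
  refine ⟨by omega, by simp, fun j hj => ?_, fun j hj => ?_, fun j hj => ?_, ?_⟩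
  · dsimp only
    rw [hdyn (j + 1) (by omega), pow_succ', Matrix.mul_assoc, Matrix.add_mul, Matrix.mul_assoc]
    simp only [Matrix.mul_add]
    abel
  · exact (Set.singleton_add_subset_singleton_add (hshift j)).trans (hX (j + 1) (by omega))
  · refine (Set.singleton_add_subset_singleton_add ?_).trans (hU (j + 1) (by omega))
    rintro _ ⟨b, hb, rfl⟩
    exact ⟨_, hshift j b hb, Matrix.mul_add _ _ _⟩
  · exact (Set.singleton_add_subset_singleton_add (hshift (N + 1))).trans hXf

theorem stmt17_general {n m : ℕ}
    (Ah : Matrix (Fin n) (Fin n) ℝ) (Bh : Matrix (Fin n) (Fin m) ℝ)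
    (K : Matrix (Fin m) (Fin n) ℝ)
    (ΔS : Matrix (Fin n) (Fin n ⊕ Fin m) ℝ) (hΔS : ∀ i j, 0 ≤ ΔS i j)
    (wbar : Fin n → ℝ) (hwbar : ∀ i, 0 ≤ wbar i)
    (FΔ : ℕ → Matrix (Fin n) (Fin n ⊕ Fin m) ℝ) (hFΔ0 : FΔ 0 = ΔS)
    (hFΔ : ∀ j, FΔ (j + 1) =
      (ΔS.submatrix id Sum.inl + ΔS.submatrix id Sum.inr * matAbs K) *
        ∑ i ∈ Finset.range (j + 1), matAbs ((Ah + Bh * K) ^ (j - i)) * FΔ i)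
    (FW : ℕ → Matrix (Fin n) (Fin 1) ℝ) (hFW0 : FW 0 = colVec wbar)
    (hFW : ∀ j, FW (j + 1) =
      (ΔS.submatrix id Sum.inl + ΔS.submatrix id Sum.inr * matAbs K) *
        ∑ i ∈ Finset.range (j + 1), matAbs ((Ah + Bh * K) ^ (j - i)) * FW i)
    (X : Set (Matrix (Fin n) (Fin 1) ℝ)) (U : Set (Matrix (Fin m) (Fin 1) ℝ))
    (Xf : Set (Matrix (Fin n) (Fin 1) ℝ))
    (γ : ℝ) (ℓ : Matrix (Fin m) (Fin 1) ℝ → ℝ) (hℓ : ∀ u, 0 ≤ ℓ u)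
    (x : Matrix (Fin n) (Fin 1) ℝ) (N : ℕ) (hN : 2 ≤ N)
    (z : ℕ → Matrix (Fin n) (Fin 1) ℝ) (v : ℕ → Matrix (Fin m) (Fin 1) ℝ)
    (hfeas : Feasible Ah Bh K FΔ FW X U Xf x N z v) :
    ∀ (A : Matrix (Fin n) (Fin n) ℝ) (B : Matrix (Fin n) (Fin m) ℝ),
      (∀ i j, |Matrix.fromCols A B i j - Matrix.fromCols Ah Bh i j| ≤ ΔS i j) →
      ∀ w ∈ intervalMat 0 (colVec wbar),
        ∃ (z' : ℕ → Matrix (Fin n) (Fin 1) ℝ) (v' : ℕ → Matrix (Fin m) (Fin 1) ℝ),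
          Feasible Ah Bh K FΔ FW X U Xf (A * x + B * v 0 + w) (N - 1) z' v' ∧
          γ * ((N - 1 : ℕ) : ℝ) + ∑ j ∈ Finset.range (N - 1), ℓ (v' j - K * z' j) ≤
            (γ * (N : ℝ) + ∑ j ∈ Finset.range N, ℓ (v j - K * z j)) - γ := by
  intro A B hAB w hw
  have hΔK := submatrix_inl_add_submatrix_inr_mul_eq_mul_fromRows ΔS (matAbs K)
  have hΔK_nonneg : ∀ i j,
      0 ≤ (ΔS.submatrix id Sum.inl + ΔS.submatrix id Sum.inr * matAbs K) i j := by
    rw [hΔK, ← matAbs_fromRows_one]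
    exact mul_apply_nonneg hΔS fun _ _ => abs_nonneg _
  have hFΔ_nonneg := apply_nonneg_of_eq_mul_convolve (fun _ _ _ => abs_nonneg _)
    hΔK_nonneg (hFΔ0 ▸ hΔS) hFΔ
  have hFW_nonneg := apply_nonneg_of_eq_mul_convolve (fun _ _ _ => abs_nonneg _)
    hΔK_nonneg (hFW0 ▸ fun i _ => hwbar i) hFW
  have hx : A * x + B * v 0 + w =
      z 1 + (fromCols (A - Ah) (B - Bh) * fromRows (z 0) (v 0) + w) := by
    rw [hfeas.2.2.1 0 (by omega), fromCols_mul_fromRows, Matrix.sub_mul, Matrix.sub_mul,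
      hfeas.2.1]
    abel
  refine ⟨_, _, hx ▸ hfeas.shift hN fun j b hb => add_mem_Btube_succ hΔK hFΔ0 hFΔ hFW
    hFΔ_nonneg hFW_nonneg (hFW0 ▸ abs_fromCols_sub_mul_add_apply_le hAB hw _) hb, ?_⟩
  obtain ⟨N, rfl⟩ := Nat.exists_eq_add_of_le' hN
  rw [show N + 2 - 1 = N + 1 by omega, sum_range_succ' _ (N + 1)]
  simp only [Matrix.mul_add, add_sub_add_right_eq_sub]
  push_cast
  linarith [hℓ (v 0 - K * z 0)]

/-- cost decrease under the shifted candidate solution. -/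
theorem stmt17 {n m : ℕ}
    (Ah : Matrix (Fin n) (Fin n) ℝ) (Bh : Matrix (Fin n) (Fin m) ℝ)
    (K : Matrix (Fin m) (Fin n) ℝ)
    (ΔS : Matrix (Fin n) (Fin n ⊕ Fin m) ℝ) (hΔS : ∀ i j, 0 ≤ ΔS i j)
    (wbar : Fin n → ℝ) (hwbar : ∀ i, 0 ≤ wbar i)
    (FΔ : ℕ → Matrix (Fin n) (Fin n ⊕ Fin m) ℝ) (hFΔ0 : FΔ 0 = ΔS)
    (hFΔ : ∀ j, FΔ (j + 1) =
      (ΔS.submatrix id Sum.inl + ΔS.submatrix id Sum.inr * matAbs K) *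
        ∑ i ∈ Finset.range (j + 1), matAbs ((Ah + Bh * K) ^ (j - i)) * FΔ i)
    (FW : ℕ → Matrix (Fin n) (Fin 1) ℝ) (hFW0 : FW 0 = colVec wbar)
    (hFW : ∀ j, FW (j + 1) =
      (ΔS.submatrix id Sum.inl + ΔS.submatrix id Sum.inr * matAbs K) *
        ∑ i ∈ Finset.range (j + 1), matAbs ((Ah + Bh * K) ^ (j - i)) * FW i)
    (X : Set (Matrix (Fin n) (Fin 1) ℝ)) (U : Set (Matrix (Fin m) (Fin 1) ℝ))
    (Xf : Set (Matrix (Fin n) (Fin 1) ℝ))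
    (γ : ℝ) (hγ : 0 < γ) (ℓ : Matrix (Fin m) (Fin 1) ℝ → ℝ) (hℓ : ∀ u, 0 ≤ ℓ u)
    (x : Matrix (Fin n) (Fin 1) ℝ) (N : ℕ) (hN : 2 ≤ N)
    (z : ℕ → Matrix (Fin n) (Fin 1) ℝ) (v : ℕ → Matrix (Fin m) (Fin 1) ℝ)
    (hfeas : Feasible Ah Bh K FΔ FW X U Xf x N z v) :
    ∀ (A : Matrix (Fin n) (Fin n) ℝ) (B : Matrix (Fin n) (Fin m) ℝ),
      (∀ i j, |Matrix.fromCols A B i j - Matrix.fromCols Ah Bh i j| ≤ ΔS i j) →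
      ∀ w ∈ intervalMat 0 (colVec wbar),
        ∃ (z' : ℕ → Matrix (Fin n) (Fin 1) ℝ) (v' : ℕ → Matrix (Fin m) (Fin 1) ℝ),
          Feasible Ah Bh K FΔ FW X U Xf (A * x + B * v 0 + w) (N - 1) z' v' ∧
          γ * ((N - 1 : ℕ) : ℝ) + ∑ j ∈ Finset.range (N - 1), ℓ (v' j - K * z' j) ≤
            (γ * (N : ℝ) + ∑ j ∈ Finset.range N, ℓ (v j - K * z j)) - γ :=
  stmt17_general Ah Bh K ΔS hΔS wbar hwbar FΔ hFΔ0 hFΔ FW hFW0 hFW X U Xf γ ℓ hℓ x N hN z v hfeas
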